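/- Fix τ ∈ [0,1] and λ > 0, and let ĉ ∈ ℝ and Q̂ : [θmin, θmax] → ℝ be twice continuously differentiable with Q̂ > 0, ∫_Θ Q̂(θ) dθ = 1, α Q̂''(θ) + (−λ ĉ + g_τ(θ) λ² + r) Q̂(θ) = 0 on Θ, and Q̂'(θmin) = Q̂'(θmax) = 0. Then for every ε > 0 there exists a₀(ε) > 0 such that, for every a ≥ a₀(ε), any solution (c, μ) of the slab problem P_{τ,a} satisfying ν(0) = ε has c ≤ ĉ. -/

import Mathlib

/-!
Compare `μ` with the exponential profile `ψ(ξ, θ) = e^{-λξ} Q̂(θ)`, which solves the equation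
linearised at `μ = 0` with speed `ĉ`. Let `M` be the least constant with `μ ≤ Mψ` on the slab.
Since `ψ(0, ·) = Q̂` has mass one, `ν(0) = ε` forces `M ≥ ε`. For `a` large, `εψ` exceeds the
boundary datum `1/|Θ|` at `ξ = -a`, and `μ(a, ·) = 0`, so `Mψ` touches `μ` at a point with
`ξ` in the interior (but possibly with `θ` on the boundary, where the Neumann conditions take the
place of the first-order condition in `θ`). There `μ_ξ = -λμ`, `μ_ξξ ≤ λ²μ` and
`α μ_θθ ≤ (λĉ - g_τ λ² - r) μ`, and the equation gives `λ (c - ĉ) μ ≤ -r μ ν ≤ 0`.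
-/

open Set Filter MeasureTheory

/-- A solution of the slab problem `P_{τ,a}`: a nonnegative twice continuously
differentiable function solving the equation with diffusivity `g_τ(θ) = thmin + τ(θ - thmin)`
on `(-a, a) × (thmin, thmax)`, with Neumann conditions in `θ` and the prescribed
boundary values at `ξ = ±a`. -/
def IsSlabSolution (thmin thmax alpha r τ a c : ℝ) (μ : ℝ → ℝ → ℝ) : Prop :=
  (∀ ξ ∈ Set.Icc (-a) a, ∀ θ ∈ Set.Icc thmin thmax, 0 ≤ μ ξ θ) ∧
  ContDiff ℝ 2 (Function.uncurry μ) ∧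
  (∀ ξ ∈ Set.Ioo (-a) a, ∀ θ ∈ Set.Ioo thmin thmax,
    -(c * deriv (fun x => μ x θ) ξ)
      - (thmin + τ * (θ - thmin)) * iteratedDeriv 2 (fun x => μ x θ) ξ
      - alpha * iteratedDeriv 2 (fun t => μ ξ t) θ
      = r * μ ξ θ * (1 - ∫ t in Set.Ioo thmin thmax, μ ξ t)) ∧
  (∀ ξ ∈ Set.Ioo (-a) a,
    deriv (fun t => μ ξ t) thmin = 0 ∧ deriv (fun t => μ ξ t) thmax = 0) ∧
  (∀ θ ∈ Set.Icc thmin thmax, μ (-a) θ = 1 / (thmax - thmin) ∧ μ a θ = 0)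

open Topology Function

theorem iteratedDeriv_two_eq_deriv_deriv {𝕜 F : Type*} [NontriviallyNormedField 𝕜]
    [NormedAddCommGroup F] [NormedSpace 𝕜 F] (f : 𝕜 → F) :
    iteratedDeriv 2 f = deriv (deriv f) := by
  rw [iteratedDeriv_succ, iteratedDeriv_one]

theorem deriv_deriv_nonneg_of_isMinOn_Ico {h : ℝ → ℝ} {x b : ℝ} (hc : ContinuousOn h (Ico x b))
    (hxb : x < b) (hd : deriv h x = 0) (hmin : IsMinOn h (Ico x b) x) :
    0 ≤ deriv (deriv h) x := by
  by_contra! hneg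
  have hdecr : ∀ᶠ y in 𝓝[>] x, deriv h y < 0 :=
    deriv_neg_right_of_sign_deriv <| nhdsWithin_le_nhds <|
      eventually_nhdsWithin_sign_eq_of_deriv_neg hneg hd
  obtain ⟨u, hxu, hu⟩ := mem_nhdsGT_iff_exists_Ioo_subset.1 hdecr
  obtain ⟨y, hxy, hyub⟩ := exists_between (lt_min hxu hxb)
  have hanti : StrictAntiOn h (Icc x y) := by
    refine strictAntiOn_of_deriv_neg (convex_Icc x y) (hc.mono ?_) fun z hz => hu ?_
    · exact Icc_subset_Ico_right (hyub.trans_le (min_le_right _ _))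
    · rw [interior_Icc] at hz
      exact ⟨hz.1, hz.2.trans (hyub.trans_le (min_le_left _ _))⟩
  have := hanti (left_mem_Icc.2 hxy.le) (right_mem_Icc.2 hxy.le) hxy
  exact this.not_ge (hmin ⟨hxy.le, hyub.trans_le (min_le_right _ _)⟩)

theorem deriv_deriv_nonneg_of_isMinOn_Ioc {h : ℝ → ℝ} {x b : ℝ} (hc : ContinuousOn h (Ioc b x))
    (hbx : b < x) (hd : deriv h x = 0) (hmin : IsMinOn h (Ioc b x) x) :
    0 ≤ deriv (deriv h) x := by
  have hneg := deriv_deriv_nonneg_of_isMinOn_Ico (h := fun y => h (-y)) (x := -x) (b := -b)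
    (hc.comp continuousOn_neg fun y hy => ⟨lt_neg.1 hy.2, neg_le.1 hy.1⟩) (neg_lt_neg hbx)
    (by simp [deriv_comp_neg, hd]) fun y hy => by
      simpa using hmin ⟨lt_neg.1 hy.2, neg_le.1 hy.1⟩
  have : deriv (fun y => h (-y)) = fun y => -deriv h (-y) := funext (deriv_comp_neg h)
  simpa [this, deriv_comp_neg] using hneg

theorem iteratedDeriv_two_nonneg_of_isMinOn_Icc {h : ℝ → ℝ} {lo hi x : ℝ} (hh : ContDiff ℝ 2 h)
    (hlohi : lo < hi) (hx : x ∈ Icc lo hi) (hd : deriv h x = 0) (hmin : IsMinOn h (Icc lo hi) x) :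
    0 ≤ iteratedDeriv 2 h x := by
  rw [iteratedDeriv_two_eq_deriv_deriv]
  rcases hx.2.lt_or_eq with hxhi | rfl
  · exact deriv_deriv_nonneg_of_isMinOn_Ico hh.continuous.continuousOn hxhi hd
      (hmin.on_subset (Ico_subset_Icc_self.trans (Icc_subset_Icc_left hx.1)))
  · exact deriv_deriv_nonneg_of_isMinOn_Ioc hh.continuous.continuousOn hlohi hd
      (hmin.on_subset Ioc_subset_Icc_self)

theorem deriv_eq_of_eventuallyLE_of_eq {u v : ℝ → ℝ} {x : ℝ} (hu : DifferentiableAt ℝ u x)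
    (hv : DifferentiableAt ℝ v x) (hle : u ≤ᶠ[𝓝 x] v) (heq : u x = v x) :
    deriv u x = deriv v x := by
  have hmin : IsLocalMin (v - u) x := hle.mono fun y hy => by simpa [heq] using hy
  have := hmin.deriv_eq_zero
  rw [deriv_sub hv hu, sub_eq_zero] at this
  exact this.symm

theorem iteratedDeriv_two_le_of_le_of_eq {u v : ℝ → ℝ} {lo hi x : ℝ} (hu : ContDiff ℝ 2 u)
    (hv : ContDiff ℝ 2 v) (hlohi : lo < hi) (hx : x ∈ Icc lo hi)
    (hle : ∀ y ∈ Icc lo hi, u y ≤ v y) (heq : u x = v x) (hd : deriv u x = deriv v x) :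
    iteratedDeriv 2 u x ≤ iteratedDeriv 2 v x := by
  have hmin : IsMinOn (v - u) (Icc lo hi) x := fun y hy => by simpa [heq] using hle y hy
  have hd' : deriv (v - u) x = 0 := by
    rw [deriv_sub (hv.differentiable two_ne_zero x) (hu.differentiable two_ne_zero x), hd, sub_self]
  have := iteratedDeriv_two_nonneg_of_isMinOn_Icc (h := v - u) (hv.sub hu) hlohi hx hd' hmin
  rwa [iteratedDeriv_sub hv.contDiffAt hu.contDiffAt, sub_nonneg] at this

theorem deriv_eq_and_iteratedDeriv_two_le_of_le_const_mul_exp {u : ℝ → ℝ} {C k lo hi x : ℝ}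
    (hu : ContDiff ℝ 2 u) (hx : x ∈ Ioo lo hi) (hle : ∀ y ∈ Icc lo hi, u y ≤ C * Real.exp (k * y))
    (heq : u x = C * Real.exp (k * x)) :
    deriv u x = k * u x ∧ iteratedDeriv 2 u x ≤ k ^ 2 * u x := by
  set v : ℝ → ℝ := fun y => C * Real.exp (k * y)
  have hv : ContDiff ℝ 2 v := by fun_prop
  have hv' : ∀ n, iteratedDeriv n v x = k ^ n * v x := fun n => by
    simp only [v, iteratedDeriv_const_mul_field, iteratedDeriv_exp_const_mul]; ring
  have hvx : v x = u x := heq.symm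
  have hd : deriv u x = deriv v x :=
    deriv_eq_of_eventuallyLE_of_eq (hu.differentiable two_ne_zero x)
      (hv.differentiable two_ne_zero x)
      (eventually_of_mem (Ioo_mem_nhds hx.1 hx.2) fun y hy => hle y (Ioo_subset_Icc_self hy)) heq
  refine ⟨?_, ?_⟩
  · simpa [← iteratedDeriv_one, hv', hvx] using hd
  · have := iteratedDeriv_two_le_of_le_of_eq hu hv (hx.1.trans hx.2) (Ioo_subset_Icc_self hx)
      hle heq hd
    rwa [hv', hvx] at this

section PartialDerivatives

variable {E : Type*} [NormedAddCommGroup E] [NormedSpace ℝ E]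

theorem ContDiff.uncurry_deriv_fst {μ : ℝ → ℝ → E} {n : WithTop ℕ∞}
    (hμ : ContDiff ℝ (n + 1) (uncurry μ)) :
    ContDiff ℝ n (uncurry fun x y => deriv (fun x => μ x y) x) := by
  have hd : Differentiable ℝ (uncurry μ) := hμ.differentiable (by simp)
  have : (uncurry fun x y => deriv (fun x => μ x y) x) =
      fun p => fderiv ℝ (uncurry μ) p (1, 0) := by
    ext ⟨x, y⟩
    have hline : HasDerivAt (fun x : ℝ => (x, y)) ((1 : ℝ), (0 : ℝ)) x :=
      (hasDerivAt_id x).prodMk (hasDerivAt_const x y)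
    exact ((hd (x, y)).hasFDerivAt.comp_hasDerivAt x hline).deriv
  rw [this]
  exact (hμ.fderiv_right le_rfl).clm_apply contDiff_const

theorem ContDiff.uncurry_deriv_snd {μ : ℝ → ℝ → E} {n : WithTop ℕ∞}
    (hμ : ContDiff ℝ (n + 1) (uncurry μ)) :
    ContDiff ℝ n (uncurry fun x y => deriv (fun y => μ x y) y) :=
  have hswap : ContDiff ℝ ⊤ (Prod.swap : ℝ × ℝ → ℝ × ℝ) := contDiff_snd.prodMk contDiff_fst
  (ContDiff.uncurry_deriv_fst (μ := flip μ) (hμ.comp (hswap.of_le le_top))).comp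
    (hswap.of_le le_top)

theorem ContDiff.continuous_uncurry_iteratedDeriv_two_fst {μ : ℝ → ℝ → E}
    (hμ : ContDiff ℝ 2 (uncurry μ)) :
    Continuous (uncurry fun x y => iteratedDeriv 2 (fun x => μ x y) x) := by
  simp only [iteratedDeriv_two_eq_deriv_deriv]
  exact (ContDiff.uncurry_deriv_fst (n := 0) (ContDiff.uncurry_deriv_fst (n := 1) hμ)).continuous

theorem ContDiff.continuous_uncurry_iteratedDeriv_two_snd {μ : ℝ → ℝ → E}
    (hμ : ContDiff ℝ 2 (uncurry μ)) :
    Continuous (uncurry fun x y => iteratedDeriv 2 (fun y => μ x y) y) := by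
  simp only [iteratedDeriv_two_eq_deriv_deriv]
  exact (ContDiff.uncurry_deriv_snd (n := 0) (ContDiff.uncurry_deriv_snd (n := 1) hμ)).continuous

end PartialDerivatives

theorem Set.EqOn.of_Ioo_of_continuous {β : Type*} [TopologicalSpace β] [T2Space β]
    {f g : ℝ → β} {a b : ℝ} (h : EqOn f g (Ioo a b)) (hab : a ≠ b) (hf : Continuous f)
    (hg : Continuous g) : EqOn f g (Icc a b) := by
  simpa [closure_Ioo hab] using h.closure hf hg

theorem setIntegral_le_of_le_const_mul {α : Type*} [MeasurableSpace α] {ρ : Measure α}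
    {f g : α → ℝ} {s : Set α} {M : ℝ} (hs : MeasurableSet s) (hf : IntegrableOn f s ρ)
    (hg : IntegrableOn g s ρ) (hg1 : ∫ x in s, g x ∂ρ = 1) (hle : ∀ x ∈ s, f x ≤ M * g x) :
    ∫ x in s, f x ∂ρ ≤ M :=
  calc ∫ x in s, f x ∂ρ ≤ ∫ x in s, M * g x ∂ρ := setIntegral_mono_on hf (hg.const_mul M) hs hle
    _ = M := by rw [integral_const_mul, hg1, mul_one]

theorem IsCompact.exists_eq_mul_and_forall_le_mul {X : Type*} [TopologicalSpace X] {K : Set X}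
    {f g : X → ℝ} (hK : IsCompact K) (hne : K.Nonempty) (hf : ContinuousOn f K)
    (hg : ContinuousOn g K) (hgpos : ∀ q ∈ K, 0 < g q) :
    ∃ p ∈ K, ∃ M, f p = M * g p ∧ ∀ q ∈ K, f q ≤ M * g q := by
  obtain ⟨p, hp, hmax⟩ := hK.exists_isMaxOn hne (hf.div hg fun q hq => (hgpos q hq).ne')
  exact ⟨p, hp, f p / g p, (div_mul_cancel₀ _ (hgpos p hp).ne').symm,
    fun q hq => (div_le_iff₀ (hgpos q hq)).1 (hmax hq)⟩

namespace IsSlabSolution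

variable {thmin thmax alpha r τ a c : ℝ} {μ : ℝ → ℝ → ℝ}

theorem pde_of_mem_Icc (hμ : IsSlabSolution thmin thmax alpha r τ a c μ) (hthth : thmin < thmax)
    {ξ θ : ℝ} (hξ : ξ ∈ Ioo (-a) a) (hθ : θ ∈ Icc thmin thmax) :
    -(c * deriv (fun x => μ x θ) ξ)
      - (thmin + τ * (θ - thmin)) * iteratedDeriv 2 (fun x => μ x θ) ξ
      - alpha * iteratedDeriv 2 (fun t => μ ξ t) θ
      = r * μ ξ θ * (1 - ∫ t in Ioo thmin thmax, μ ξ t) := by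
  obtain ⟨-, hsm, hpde, -, -⟩ := hμ
  have h1 := (hsm.uncurry_deriv_fst (n := 1)).continuous.uncurry_left ξ
  have h11 := hsm.continuous_uncurry_iteratedDeriv_two_fst.uncurry_left ξ
  have h22 := hsm.continuous_uncurry_iteratedDeriv_two_snd.uncurry_left ξ
  have h0 := hsm.continuous.uncurry_left ξ
  exact Set.EqOn.of_Ioo_of_continuous (hpde ξ hξ) hthth.ne (by fun_prop) (by fun_prop) hθ

theorem iteratedDeriv_two_snd_le_of_le_of_eq (hμ : IsSlabSolution thmin thmax alpha r τ a c μ)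
    (hthth : thmin < thmax) {Q : ℝ → ℝ} (hQ : ContDiff ℝ 2 Q)
    (hQbc : deriv Q thmin = 0 ∧ deriv Q thmax = 0) {C ξ θ : ℝ} (hξ : ξ ∈ Ioo (-a) a)
    (hθ : θ ∈ Icc thmin thmax) (hle : ∀ t ∈ Icc thmin thmax, μ ξ t ≤ C * Q t)
    (heq : μ ξ θ = C * Q θ) :
    iteratedDeriv 2 (fun t => μ ξ t) θ ≤ C * iteratedDeriv 2 Q θ := by
  obtain ⟨-, hsm, -, hneu, -⟩ := hμ
  have hu : ContDiff ℝ 2 (fun t => μ ξ t) := hsm.comp (contDiff_const.prodMk contDiff_id)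
  have hv : ContDiff ℝ 2 (fun t => C * Q t) := contDiff_const.mul hQ
  have hd : deriv (fun t => μ ξ t) θ = deriv (fun t => C * Q t) θ := by
    rcases hθ.1.eq_or_lt with rfl | hlo
    · rw [deriv_const_mul_field, (hneu ξ hξ).1, hQbc.1, mul_zero]
    rcases hθ.2.eq_or_lt with rfl | hhi
    · rw [deriv_const_mul_field, (hneu ξ hξ).2, hQbc.2, mul_zero]
    exact deriv_eq_of_eventuallyLE_of_eq (hu.differentiable two_ne_zero θ)
      (hv.differentiable two_ne_zero θ) (eventually_of_mem (Ioo_mem_nhds hlo hhi)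
        fun t ht => hle t (Ioo_subset_Icc_self ht)) heq
  simpa [iteratedDeriv_const_mul_field] using
    iteratedDeriv_two_le_of_le_of_eq hu hv hthth hθ hle heq hd

theorem le_of_touched_from_above (hμ : IsSlabSolution thmin thmax alpha r τ a c μ)
    (hthth : thmin < thmax) (hth : 0 ≤ thmin) (hτ : 0 ≤ τ) (halpha : 0 ≤ alpha) (hr : 0 ≤ r)
    {lam chat : ℝ} (hlam : 0 < lam) {Q : ℝ → ℝ} (hQ : ContDiff ℝ 2 Q)
    (hQeq : ∀ θ ∈ Ioo thmin thmax,
      alpha * iteratedDeriv 2 Q θ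
        + (-(lam * chat) + (thmin + τ * (θ - thmin)) * lam ^ 2 + r) * Q θ = 0)
    (hQbc : deriv Q thmin = 0 ∧ deriv Q thmax = 0) {M ξ₀ θ₀ : ℝ} (hξ₀ : ξ₀ ∈ Ioo (-a) a)
    (hθ₀ : θ₀ ∈ Icc thmin thmax)
    (hle : ∀ ξ ∈ Icc (-a) a, ∀ θ ∈ Icc thmin thmax, μ ξ θ ≤ M * (Real.exp (-lam * ξ) * Q θ))
    (heq : μ ξ₀ θ₀ = M * (Real.exp (-lam * ξ₀) * Q θ₀)) (hpos : 0 < μ ξ₀ θ₀) :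
    c ≤ chat := by
  have hν : 0 ≤ ∫ t in Ioo thmin thmax, μ ξ₀ t := setIntegral_nonneg measurableSet_Ioo
    fun t ht => hμ.1 ξ₀ (Ioo_subset_Icc_self hξ₀) t (Ioo_subset_Icc_self ht)
  obtain ⟨hx1, hx2⟩ := deriv_eq_and_iteratedDeriv_two_le_of_le_const_mul_exp
    (u := fun x => μ x θ₀) (C := M * Q θ₀) (hμ.2.1.comp (contDiff_id.prodMk contDiff_const)) hξ₀
    (fun ξ hξ => (hle ξ hξ θ₀ hθ₀).trans_eq (by ring)) (heq.trans (by ring))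
  have hθθ := hμ.iteratedDeriv_two_snd_le_of_le_of_eq hthth hQ hQbc hξ₀ hθ₀
    (fun θ hθ => (hle ξ₀ (Ioo_subset_Icc_self hξ₀) θ hθ).trans_eq (mul_assoc _ _ _).symm)
    (heq.trans (mul_assoc _ _ _).symm)
  have hQθ₀ := Set.EqOn.of_Ioo_of_continuous hQeq hthth.ne
    (by have := hQ.continuous_iteratedDeriv 2 le_rfl; fun_prop) continuous_const hθ₀
  have hpde := hμ.pde_of_mem_Icc hthth hξ₀ hθ₀
  have hg : 0 ≤ thmin + τ * (θ₀ - thmin) := by nlinarith [hθ₀.1]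
  set K := μ ξ₀ θ₀
  have hxx : (thmin + τ * (θ₀ - thmin)) * iteratedDeriv 2 (fun x => μ x θ₀) ξ₀
      ≤ (thmin + τ * (θ₀ - thmin)) * (lam ^ 2 * K) :=
    mul_le_mul_of_nonneg_left (by simpa using hx2) hg
  have hθθ' : alpha * iteratedDeriv 2 (fun t => μ ξ₀ t) θ₀
      ≤ (lam * chat - (thmin + τ * (θ₀ - thmin)) * lam ^ 2 - r) * K :=
    calc _ ≤ alpha * (M * Real.exp (-lam * ξ₀) * iteratedDeriv 2 Q θ₀) :=
          mul_le_mul_of_nonneg_left hθθ halpha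
      _ = _ := by rw [heq]; linear_combination (M * Real.exp (-lam * ξ₀)) * hQθ₀
  have hkey : lam * K * (c - chat) ≤ 0 := by
    -- the equation now reads `λ c K - g μ_ξξ - α μ_θθ = r K (1 - ν)`, with `hxx`, `hθθ'` bounding
    -- the left side below by `λ (c - ĉ) K + r K`
    rw [hx1] at hpde
    nlinarith [mul_nonneg (mul_nonneg hr hpos.le) hν]
  exact sub_nonpos.1 (nonpos_of_mul_nonpos_right hkey (mul_pos hlam hpos))

theorem mem_Ioo_of_touched_from_above (hμ : IsSlabSolution thmin thmax alpha r τ a c μ)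
    {lam : ℝ} {Q : ℝ → ℝ} {M ξ₀ θ₀ : ℝ} (hξ₀ : ξ₀ ∈ Icc (-a) a) (hθ₀ : θ₀ ∈ Icc thmin thmax)
    (heq : μ ξ₀ θ₀ = M * (Real.exp (-lam * ξ₀) * Q θ₀))
    (hM : 1 < M * ((thmax - thmin) * Q θ₀) * Real.exp (lam * a)) :
    ξ₀ ∈ Ioo (-a) a := by
  obtain ⟨-, -, -, -, hbc⟩ := hμ
  refine ⟨hξ₀.1.lt_of_ne ?_, hξ₀.2.lt_of_ne ?_⟩
  · rintro rfl
    have hM1 : M * ((thmax - thmin) * Q θ₀) * Real.exp (lam * a)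
        = (thmax - thmin) / (thmax - thmin) := by
      rw [div_eq_mul_one_div, ← (hbc θ₀ hθ₀).1, heq, neg_mul_neg]
      ring
    linarith [div_self_le_one (thmax - thmin)]
  · rintro rfl
    have hM0 : M * (Real.exp (-lam * ξ₀) * Q θ₀) = 0 := heq.symm.trans (hbc θ₀ hθ₀).2
    have : M * Q θ₀ = 0 := by simpa [Real.exp_ne_zero, mul_left_comm] using hM0
    have : M * ((thmax - thmin) * Q θ₀) * Real.exp (lam * ξ₀) = 0 := by
      rw [mul_left_comm, this]; simp
    linarith

end IsSlabSolution

theorem statement8 (thmin thmax alpha r : ℝ)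
    (hth : 0 < thmin) (hthth : thmin < thmax) (halpha : 0 < alpha) (hr : 0 < r)
    (τ : ℝ) (hτ : τ ∈ Set.Icc (0 : ℝ) 1) (lam : ℝ) (hlam : 0 < lam)
    (chat : ℝ) (Qhat : ℝ → ℝ)
    (hQsm : ContDiff ℝ 2 Qhat)
    (hQpos : ∀ θ ∈ Set.Icc thmin thmax, 0 < Qhat θ)
    (hQint : (∫ θ in Set.Ioo thmin thmax, Qhat θ) = 1)
    (hQeq : ∀ θ ∈ Set.Ioo thmin thmax,
      alpha * iteratedDeriv 2 Qhat θ
        + (-(lam * chat) + (thmin + τ * (θ - thmin)) * lam ^ 2 + r) * Qhat θ = 0)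
    (hQbc : deriv Qhat thmin = 0 ∧ deriv Qhat thmax = 0) :
    ∀ ε > (0 : ℝ), ∃ a₀ > (0 : ℝ), ∀ a ≥ a₀, ∀ (c : ℝ) (μ : ℝ → ℝ → ℝ),
      IsSlabSolution thmin thmax alpha r τ a c μ →
      (∫ t in Set.Ioo thmin thmax, μ 0 t) = ε → c ≤ chat := by
  intro ε hε
  obtain ⟨θm, hθm, hQmin⟩ :=
    isCompact_Icc.exists_isMinOn (nonempty_Icc.2 hthth.le) hQsm.continuous.continuousOn
  have hm : 0 < Qhat θm := hQpos θm hθm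
  -- `a₀` is chosen so that `ε ψ(-a, ·) ≥ ε e^{λa} min Q̂` exceeds the boundary datum `1/|Θ|`
  obtain ⟨a₀, ha₀⟩ := eventually_atTop.1 <|
    ((Real.tendsto_exp_atTop.comp (tendsto_id.const_mul_atTop hlam)).const_mul_atTop
      (by positivity : 0 < ε * ((thmax - thmin) * Qhat θm))).eventually_gt_atTop 1
  refine ⟨max a₀ 1, by positivity, fun a ha c μ hμ hν => ?_⟩
  have ha₁ : 1 ≤ a := le_of_max_le_right ha
  have hμc : Continuous (uncurry μ) := hμ.2.1.continuous
  obtain ⟨⟨ξ₀, θ₀⟩, ⟨hξ₀, hθ₀⟩, M, heq, hle⟩ :=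
    (isCompact_Icc.prod isCompact_Icc).exists_eq_mul_and_forall_le_mul
    (K := Icc (-a) a ×ˢ Icc thmin thmax) (g := fun p => Real.exp (-lam * p.1) * Qhat p.2)
    ⟨(0, thmin), ⟨by constructor <;> linarith, left_mem_Icc.2 hthth.le⟩⟩
    hμc.continuousOn (by have := hQsm.continuous; fun_prop)
    fun p hp => mul_pos (Real.exp_pos _) (hQpos p.2 hp.2)
  have hεM : ε ≤ M := hν ▸ setIntegral_le_of_le_const_mul measurableSet_Ioo
    ((hμc.uncurry_left 0).integrableOn_Icc.mono_set Ioo_subset_Icc_self)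
    (hQsm.continuous.integrableOn_Icc.mono_set Ioo_subset_Icc_self) hQint fun θ hθ =>
      (hle (0, θ) ⟨⟨by linarith, by linarith⟩, Ioo_subset_Icc_self hθ⟩).trans_eq (by simp)
  have hξ₀' := hμ.mem_Ioo_of_touched_from_above hξ₀ hθ₀ heq <|
    calc 1 < ε * ((thmax - thmin) * Qhat θm) * Real.exp (lam * a) := ha₀ a (le_of_max_le_left ha)
      _ ≤ M * ((thmax - thmin) * Qhat θ₀) * Real.exp (lam * a) := by
        gcongr
        · linarith
        · exact hQmin hθ₀
  exact hμ.le_of_touched_from_above hthth hth.le hτ.1 halpha.le hr.le hlam hQsm hQeq hQbc hξ₀'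
    hθ₀
    (fun ξ hξ θ hθ => hle (ξ, θ) ⟨hξ, hθ⟩) heq
    ((mul_pos (hε.trans_le hεM) (mul_pos (Real.exp_pos _) (hQpos θ₀ hθ₀))).trans_eq heq.symm)
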